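/- Let G = C_n be a cycle (n ≥ 3) and L a list-assignment with |L(v)| ≥ 3 for all v. If the lists are not all identical, and α, β are proper L-colourings each having at least one unfrozen vertex, then α can be transformed into β by a sequence of single-vertex recolourings through proper L-colourings. -/

import Mathlib

/-- A proper list colouring. -/
def properL {V : Type*} (G : SimpleGraph V) (L : V → Finset ℕ) (c : V → ℕ) : Prop :=
  (∀ v, c v ∈ L v) ∧ ∀ ⦃u w⦄, G.Adj u w → c u ≠ c w

/-- Vertex `v` is unfrozen under `c`. -/
def unfrozenAt {V : Type*} (G : SimpleGraph V) (L : V → Finset ℕ) (c : V → ℕ) (v : V) : Prop :=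
  ∃ b ∈ L v, b ≠ c v ∧ ∀ u, G.Adj v u → c u ≠ b

/-- A single-vertex recolouring step between proper `L`-colourings. -/
def recolStep {V : Type*} (G : SimpleGraph V) (L : V → Finset ℕ) (c c' : V → ℕ) : Prop :=
  properL G L c ∧ properL G L c' ∧ ∃ x, c x ≠ c' x ∧ ∀ u, u ≠ x → c u = c' u

/-!
Pick adjacent `p`, `q` and a colour `a ∈ L p \ L q` (the lists are not all equal and `G` is
connected) and number the cycle `p = f 0, q = f 1, …, f (m - 1)`. An unfrozen vertex can be moved
around the cycle: if its neighbour is frozen, recolouring it frees its old colour for that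
neighbour. Moving it to `f (m - 1)` lets `f 0` be recoloured to `a`. While `f 0` keeps colour `a`,
the vertex `f 1` effectively has one neighbour fewer, and any two colourings with `f 0 ↦ a` are
connected by fixing `f (m - 1), …, f 1` one at a time, each time first pushing the previous vertex
off the target colour. Since recolouring is reversible, this connects `α` and `β`.
-/

open Function

theorem Finset.mem_ne_ne_of_subset_of_three_le_card {α : Type*} [DecidableEq α] {s : Finset α}
    {x y z : α} (h3 : 3 ≤ s.card) (hs : s ⊆ {x, y, z}) : y ∈ s ∧ y ≠ x ∧ y ≠ z := by
  have not_subset_pair : ∀ a b : α, ¬ s ⊆ {a, b} := fun a b h => by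
    have := (card_le_card h).trans card_le_two
    omega
  refine ⟨?_, ?_, ?_⟩
  · by_contra hy
    exact not_subset_pair x z fun t ht => by grind [hs ht]
  · rintro rfl
    exact not_subset_pair y z (by simpa using hs)
  · rintro rfl
    exact not_subset_pair x y (by simpa using hs)

theorem Function.Periodic.apply_add_two_ne {α : Type*} {f : ℕ → α} {m : ℕ} (hper : Periodic f m)
    (hinj : Set.InjOn f (Set.Iio m)) (hm : 3 ≤ m) (k : ℕ) : f (k + 2) ≠ f k := by
  intro h
  rw [← hper.map_mod_nat (k + 2), ← hper.map_mod_nat k] at h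
  have hmod := Nat.sub_mod_eq_zero_of_mod_eq
    (hinj (Nat.mod_lt _ (by omega)) (Nat.mod_lt _ (by omega)) h)
  rw [Nat.add_sub_cancel_left, Nat.mod_eq_of_lt (by omega)] at hmod
  omega

namespace SimpleGraph

variable {V : Type*} {G : SimpleGraph V}

theorem neighborSet_eq_pair [Finite V] {v x y : V} (hreg : (G.neighborSet v).ncard = 2)
    (hx : G.Adj v x) (hy : G.Adj v y) (hxy : x ≠ y) : G.neighborSet v = {x, y} :=
  have hsub : {x, y} ⊆ G.neighborSet v := Set.pair_subset hx hy
  (Set.eq_of_subset_of_ncard_le hsub (by rw [hreg, Set.ncard_pair hxy]) (Set.toFinite _)).symm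

theorem eq_or_eq_of_neighborSet_eq_pair {v x y u : V} (hv : G.neighborSet v = {x, y})
    (hu : G.Adj v u) : u = x ∨ u = y := by
  have hu' : u ∈ G.neighborSet v := hu
  simpa [hv] using hu'

theorem Connected.exists_adj_mem_notMem {α : Type*} (hG : G.Connected) {L : V → Finset α}
    (hL : ∃ u v, L u ≠ L v) : ∃ p q, G.Adj p q ∧ ∃ a ∈ L p, a ∉ L q := by
  obtain ⟨u, v, huv⟩ := hL
  obtain ⟨d, -, hd₁, hd₂⟩ :=
    (hG.preconnected u v).some.exists_boundary_dart {w | L w = L u} rfl (Ne.symm huv)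
  have hne : L d.fst ≠ L d.snd := fun h => hd₂ (h.symm.trans hd₁)
  by_cases hsub : L d.fst ⊆ L d.snd
  · obtain ⟨a, ha, ha'⟩ := Finset.not_subset.1 fun h => hne (hsub.antisymm h)
    exact ⟨d.snd, d.fst, d.adj.symm, a, ha, ha'⟩
  · obtain ⟨a, ha, ha'⟩ := Finset.not_subset.1 hsub
    exact ⟨d.fst, d.snd, d.adj, a, ha, ha'⟩

structure IsCyclicEnumeration (G : SimpleGraph V) (f : ℕ → V) (m : ℕ) : Prop where
  three_le : 3 ≤ m
  periodic : Periodic f m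
  injOn : Set.InjOn f (Set.Iio m)
  surjective : Surjective f
  neighborSet_eq : ∀ k, G.neighborSet (f (k + 1)) = {f k, f (k + 2)}

theorem Walk.IsCycle.isCyclicEnumeration [Finite V] {u : V} {c : G.Walk u u} (hc : c.IsCycle)
    (hsupp : ∀ v, v ∈ c.support) (hreg : ∀ v, (G.neighborSet v).ncard = 2) :
    G.IsCyclicEnumeration (fun k => c.getVert (k % c.length)) c.length := by
  set f : ℕ → V := fun k => c.getVert (k % c.length)
  have hm := hc.three_le_length
  have hper : Periodic f c.length := fun k => by simp [f]
  have hinj : Set.InjOn f (Set.Iio c.length) := fun i hi j hj h => by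
    simp only [Set.mem_Iio, f, Nat.mod_eq_of_lt hi, Nat.mod_eq_of_lt hj] at hi hj h
    exact hc.getVert_injOn' (by simp; omega) (by simp; omega) h
  have hf_eq : ∀ n ≤ c.length, f n = c.getVert n := fun n hn => by
    rcases hn.lt_or_eq with hn | rfl
    · simp [f, Nat.mod_eq_of_lt hn]
    · simp [f]
  have hadj : ∀ k, G.Adj (f k) (f (k + 1)) := fun k => by
    have hk := Nat.mod_lt k (by omega : 0 < c.length)
    have hsucc : f (k + 1) = f (k % c.length + 1) := by
      rw [← hper.map_mod_nat (k % c.length + 1), Nat.mod_add_mod, hper.map_mod_nat]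
    rw [← hper.map_mod_nat k, hsucc, hf_eq _ hk.le, hf_eq _ hk]
    exact c.adj_getVert_succ hk
  refine ⟨hm, hper, hinj, fun v => ?_, fun k => ?_⟩
  · obtain ⟨n, rfl, hn⟩ := Walk.mem_support_iff_exists_getVert.1 (hsupp v)
    exact ⟨n, hf_eq n hn⟩
  · exact neighborSet_eq_pair (hreg _) (hadj k).symm (hadj (k + 1))
      (hper.apply_add_two_ne hinj hm k).symm

theorem Connected.exists_isCyclicEnumeration [Finite V] (hG : G.Connected)
    (hreg : ∀ v, (G.neighborSet v).ncard = 2) {p q : V} (hpq : G.Adj p q) :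
    ∃ f m, G.IsCyclicEnumeration f m ∧ f 0 = p ∧ f 1 = q := by
  obtain ⟨c, hc, hverts⟩ :=
    IsCycles.exists_cycle_toSubgraph_verts_eq_connectedComponentSupp (fun v _ => hreg v)
      (c := G.connectedComponentMk p) rfl ⟨q, hpq⟩
  have hsupp : ∀ v, v ∈ c.support := fun v => by
    rw [← Walk.mem_verts_toSubgraph, hverts]
    exact ConnectedComponent.eq.mpr (hG.preconnected v p)
  have hm := hc.three_le_length
  have hq : q = c.snd ∨ q = c.penultimate :=
    eq_or_eq_of_neighborSet_eq_pair (neighborSet_eq_pair (hreg p) (c.adj_snd hc.not_nil)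
      (c.adj_penultimate hc.not_nil).symm hc.snd_ne_penultimate) hpq
  rcases hq with rfl | rfl
  · exact ⟨_, _, hc.isCyclicEnumeration hsupp hreg, by simp,
      by simp [Nat.mod_eq_of_lt (by omega : 1 < c.length)]⟩
  · refine ⟨_, _, hc.reverse.isCyclicEnumeration (by simpa using hsupp) hreg, by simp, ?_⟩
    simp [Nat.mod_eq_of_lt (by omega : 1 < c.length), ← Walk.snd_reverse]

end SimpleGraph

section Recolouring

variable {V : Type*} {G : SimpleGraph V} {L : V → Finset ℕ}

theorem properL.update [DecidableEq V] {c : V → ℕ} (hc : properL G L c) {x : V} {s : ℕ}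
    (hs : s ∈ L x) (hnb : ∀ u, G.Adj x u → c u ≠ s) : properL G L (update c x s) := by
  refine ⟨fun v => ?_, fun u w huw => ?_⟩
  · rcases eq_or_ne v x with rfl | hv
    · simpa using hs
    · simpa [hv] using hc.1 v
  · rcases eq_or_ne u x with rfl | hu
    · simpa [huw.ne'] using (hnb w huw).symm
    · rcases eq_or_ne w x with rfl | hw
      · simpa [hu] using hnb u huw.symm
      · simpa [hu, hw] using hc.2 huw

theorem recolStep_update [DecidableEq V] {c : V → ℕ} (hc : properL G L c) {x : V} {s : ℕ}
    (hs : s ∈ L x) (hsx : s ≠ c x) (hnb : ∀ u, G.Adj x u → c u ≠ s) :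
    recolStep G L c (update c x s) :=
  ⟨hc, hc.update hs hnb, x, by simpa using hsx.symm, fun _ hu => (update_of_ne hu _ _).symm⟩

instance : Std.Symm (recolStep G L) where
  symm _ _ := fun ⟨hc, hc', x, hx, heq⟩ => ⟨hc', hc, x, hx.symm, fun u hu => (heq u hu).symm⟩

theorem properL.of_reflTransGen {c c' : V → ℕ} (hc : properL G L c)
    (h : Relation.ReflTransGen (recolStep G L) c c') : properL G L c' := by
  induction h with
  | refl => exact hc
  | tail _ hstep _ => exact hstep.2.1

theorem Set.eqOn_update_compl {α β : Type*} [DecidableEq α] (c : α → β) {s : Set α} {x : α}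
    (hx : x ∈ s) (b : β) : Set.EqOn (update c x b) c sᶜ :=
  fun _ hv => update_of_ne (by rintro rfl; exact hv hx) _ _

theorem subset_of_not_unfrozenAt {c : V → ℕ} {w u v : V} (hw : G.neighborSet w = {u, v})
    (hfr : ¬ unfrozenAt G L c w) : L w ⊆ {c w, c u, c v} := by
  intro b hb
  by_contra hb'
  simp only [Finset.mem_insert, Finset.mem_singleton, not_or] at hb'
  refine hfr ⟨b, hb, hb'.1, fun y hy => ?_⟩
  rcases SimpleGraph.eq_or_eq_of_neighborSet_eq_pair hw hy with rfl | rfl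
  exacts [Ne.symm hb'.2.1, Ne.symm hb'.2.2]

/-- If `w` is frozen, its list consists of its own colour and those of its two neighbours, so once
`v` is recoloured, `w` may take the old colour of `v`. -/
theorem exists_reflTransGen_unfrozenAt_of_neighborSet_eq {c : V → ℕ} {v w x : V}
    (hc : properL G L c) (hw : G.neighborSet w = {v, x}) (hxv : x ≠ v) (hL : 3 ≤ (L w).card)
    (hv : unfrozenAt G L c v) :
    ∃ c', Relation.ReflTransGen (recolStep G L) c c' ∧ unfrozenAt G L c' w := by
  classical
  by_cases hw' : unfrozenAt G L c w
  · exact ⟨c, .refl, hw'⟩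
  obtain ⟨hmem, hvw, hvx⟩ :=
    Finset.mem_ne_ne_of_subset_of_three_le_card hL (subset_of_not_unfrozenAt hw hw')
  have hwv : w ≠ v := fun h => hvw (congrArg c h.symm)
  obtain ⟨b, hb, hbv, hbnb⟩ := hv
  refine ⟨update c v b, .single (recolStep_update hc hb hbv hbnb), c v, hmem, ?_, fun y hy => ?_⟩
  · rwa [update_of_ne hwv]
  · rcases SimpleGraph.eq_or_eq_of_neighborSet_eq_pair hw hy with rfl | rfl
    · simpa using hbv
    · rw [update_of_ne hxv]
      exact hvx.symm

end Recolouring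

namespace SimpleGraph.IsCyclicEnumeration

variable {V : Type*} {G : SimpleGraph V} {f : ℕ → V} {m : ℕ}

theorem apply_self (hf : G.IsCyclicEnumeration f m) : f m = f 0 := by
  simpa using hf.periodic 0

theorem adj (hf : G.IsCyclicEnumeration f m) (k : ℕ) : G.Adj (f k) (f (k + 1)) := by
  have hk : f k ∈ G.neighborSet (f (k + 1)) := by
    rw [hf.neighborSet_eq k]
    exact Set.mem_insert _ _
  exact hk.symm

theorem apply_add_two_ne (hf : G.IsCyclicEnumeration f m) (k : ℕ) : f (k + 2) ≠ f k :=
  hf.periodic.apply_add_two_ne hf.injOn hf.three_le k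

theorem exists_lt_apply_eq (hf : G.IsCyclicEnumeration f m) (v : V) : ∃ k < m, f k = v := by
  obtain ⟨k, rfl⟩ := hf.surjective v
  exact ⟨k % m, Nat.mod_lt _ (by linarith [hf.three_le]), hf.periodic.map_mod_nat k⟩

theorem apply_notMem_image_Icc (hf : G.IsCyclicEnumeration f m) {i j : ℕ} (hij : i < j)
    (hjm : j ≤ m) : f j ∉ f '' Set.Icc 1 i := by
  rintro ⟨k, ⟨hk₁, hki⟩, hkj⟩
  rcases hjm.lt_or_eq with hjm | rfl
  · have := hf.injOn (by simp; omega) (Set.mem_Iio.2 hjm) hkj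
    omega
  · rw [hf.apply_self] at hkj
    have := hf.injOn (by simp; omega) (by simp; omega) hkj
    omega

theorem apply_zero_notMem_image_Icc (hf : G.IsCyclicEnumeration f m) {i : ℕ} (him : i < m) :
    f 0 ∉ f '' Set.Icc 1 i :=
  hf.apply_self ▸ hf.apply_notMem_image_Icc him le_rfl

variable {L : V → Finset ℕ}

theorem exists_reflTransGen_unfrozenAt (hf : G.IsCyclicEnumeration f m)
    (hL : ∀ v, 3 ≤ (L v).card) {c : V → ℕ} (hc : properL G L c) {i j : ℕ} (hij : i ≤ j)
    (hi : unfrozenAt G L c (f i)) :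
    ∃ c', Relation.ReflTransGen (recolStep G L) c c' ∧ unfrozenAt G L c' (f j) := by
  induction j, hij using Nat.le_induction with
  | base => exact ⟨c, .refl, hi⟩
  | succ j _ ih =>
    obtain ⟨c₁, h₁, hj⟩ := ih
    obtain ⟨c₂, h₂, hj'⟩ := exists_reflTransGen_unfrozenAt_of_neighborSet_eq
      (hc.of_reflTransGen h₁) (hf.neighborSet_eq j) (hf.apply_add_two_ne j) (hL _) hj
    exact ⟨c₂, h₁.trans h₂, hj'⟩

/-- Move an unfrozen vertex to `f (m - 1)` and, if needed, take it off `a`; then no neighbour of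
`f 0` is coloured `a`, as `a ∉ L (f 1)`. -/
theorem exists_reflTransGen_apply_zero_eq (hf : G.IsCyclicEnumeration f m)
    (hL : ∀ v, 3 ≤ (L v).card) {a : ℕ} (ha₀ : a ∈ L (f 0)) (ha₁ : a ∉ L (f 1)) {c : V → ℕ}
    (hc : properL G L c) (hunf : ∃ v, unfrozenAt G L c v) :
    ∃ c', Relation.ReflTransGen (recolStep G L) c c' ∧ c' (f 0) = a := by
  classical
  obtain ⟨v, hv⟩ := hunf
  obtain ⟨k, hk, rfl⟩ := hf.exists_lt_apply_eq v
  obtain ⟨c₁, h₁, b, hb, hbc, hbnb⟩ :=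
    hf.exists_reflTransGen_unfrozenAt hL hc (Nat.le_sub_one_of_lt hk) hv
  obtain ⟨c₂, h₂, hc₂⟩ :
      ∃ c₂, Relation.ReflTransGen (recolStep G L) c₁ c₂ ∧ c₂ (f (m - 1)) ≠ a := by
    by_cases hca : c₁ (f (m - 1)) = a
    · exact ⟨_, .single (recolStep_update (hc.of_reflTransGen h₁) hb hbc hbnb),
        by simpa [hca] using hbc⟩
    · exact ⟨c₁, .refl, hca⟩
  by_cases hc₀ : c₂ (f 0) = a
  · exact ⟨c₂, h₁.trans h₂, hc₀⟩
  have hN : G.neighborSet (f 0) = {f (m - 1), f 1} := by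
    have := hf.neighborSet_eq (m - 1)
    rwa [Nat.sub_add_cancel (by linarith [hf.three_le]), hf.apply_self,
      show m - 1 + 2 = 1 + m by have := hf.three_le; omega, hf.periodic] at this
  refine ⟨update c₂ (f 0) a, (h₁.trans h₂).tail (recolStep_update
    ((hc.of_reflTransGen h₁).of_reflTransGen h₂) ha₀ (Ne.symm hc₀) fun u hu => ?_), by simp⟩
  rcases SimpleGraph.eq_or_eq_of_neighborSet_eq_pair hN hu with rfl | rfl
  · exact hc₂
  · exact fun h => ha₁ (h ▸ ((hc.of_reflTransGen h₁).of_reflTransGen h₂).1 _)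

/-- If no colour in the list of `f i` avoids `x` and both neighbours, that list is exactly these
three colours; then `f (i - 1)` is first pushed off its own colour, which `f i` then takes. At
`i = 0` nothing needs doing, since `c (f 0) = a ∉ L (f 1)`. -/
theorem exists_reflTransGen_apply_ne (hf : G.IsCyclicEnumeration f m)
    (hL : ∀ v, 3 ≤ (L v).card) {a : ℕ} (ha₁ : a ∉ L (f 1)) {c : V → ℕ} (hc : properL G L c)
    (hc₀ : c (f 0) = a) {i : ℕ} (him : i + 1 < m) {x : ℕ} (hx : x ∈ L (f (i + 1))) :
    ∃ c', Relation.ReflTransGen (recolStep G L) c c' ∧ c' (f i) ≠ x ∧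
      Set.EqOn c' c (f '' Set.Icc 1 i)ᶜ := by
  classical
  induction i generalizing x with
  | zero => exact ⟨c, .refl, by rintro rfl; exact ha₁ (hc₀ ▸ hx), fun _ _ => rfl⟩
  | succ i ih =>
    rcases ne_or_eq (c (f (i + 1))) x with hcx | hcx
    · exact ⟨c, .refl, hcx, fun _ _ => rfl⟩
    have hN := hf.neighborSet_eq i
    have hupdate : ∀ {c₁ : V → ℕ} (b : ℕ), Set.EqOn c₁ c (f '' Set.Icc 1 i)ᶜ →
        Set.EqOn (update c₁ (f (i + 1)) b) c (f '' Set.Icc 1 (i + 1))ᶜ := fun b h₁ => by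
      rw [← Set.insert_Icc_right_eq_Icc_add_one (Nat.le_add_left 1 i), Set.image_insert_eq]
      exact (Set.eqOn_update_compl _ (Set.mem_insert _ _) b).trans
        (h₁.mono (Set.compl_subset_compl.2 (Set.subset_insert _ _)))
    by_cases hsub : L (f (i + 1)) ⊆ {x, c (f i), c (f (i + 2))}
    · obtain ⟨hmem, hx', hi₂⟩ := Finset.mem_ne_ne_of_subset_of_three_le_card (hL _) hsub
      obtain ⟨c₁, h₁, hc₁, heq₁⟩ := ih (by omega) hmem
      have hc₁x : c₁ (f (i + 1)) = x :=
        (heq₁ (hf.apply_notMem_image_Icc (by omega) (by omega))).trans hcx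
      have hc₁i₂ : c₁ (f (i + 2)) = c (f (i + 2)) :=
        heq₁ (hf.apply_notMem_image_Icc (by omega) (by omega))
      refine ⟨_, h₁.tail (recolStep_update (hc.of_reflTransGen h₁) hmem (hc₁x ▸ hx')
        fun u hu => ?_), by simpa using hx', hupdate _ heq₁⟩
      rcases eq_or_eq_of_neighborSet_eq_pair hN hu with rfl | rfl
      · exact hc₁
      · exact hc₁i₂ ▸ Ne.symm hi₂
    · obtain ⟨s, hs, hs'⟩ := Finset.not_subset.1 hsub
      simp only [Finset.mem_insert, Finset.mem_singleton, not_or] at hs'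
      obtain ⟨hsx, hsi, hsi₂⟩ := hs'
      refine ⟨_, .single (recolStep_update hc hs (hcx ▸ hsx) fun u hu => ?_), by simpa using hsx,
        hupdate _ fun _ _ => rfl⟩
      rcases eq_or_eq_of_neighborSet_eq_pair hN hu with rfl | rfl
      exacts [Ne.symm hsi, Ne.symm hsi₂]

/-- The colours of `f k, f (k - 1), …, f 1` are set to those of `d` in turn; before `f k` is set,
`f (k - 1)` is pushed off its target colour by `exists_reflTransGen_apply_ne`. -/
theorem reflTransGen_of_eqOn (hf : G.IsCyclicEnumeration f m) (hL : ∀ v, 3 ≤ (L v).card)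
    {a : ℕ} (ha₁ : a ∉ L (f 1)) {c d : V → ℕ} (hc : properL G L c) (hd : properL G L d)
    (hc₀ : c (f 0) = a) {k : ℕ} (hkm : k < m) (hcd : Set.EqOn c d (f '' Set.Icc 1 k)ᶜ) :
    Relation.ReflTransGen (recolStep G L) c d := by
  classical
  induction k generalizing c with
  | zero =>
    obtain rfl : c = d := funext fun v => hcd (by simp)
    exact .refl
  | succ k ih =>
    rw [← Set.insert_Icc_right_eq_Icc_add_one (Nat.le_add_left 1 k), Set.image_insert_eq] at hcd
    have hcd' : ∀ v ∉ f '' Set.Icc 1 k, v ≠ f (k + 1) → c v = d v := fun v hv hvk =>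
      hcd (by simp [hv, hvk])
    by_cases hcdk : c (f (k + 1)) = d (f (k + 1))
    · refine ih hc hc₀ (by omega) fun v hv => ?_
      by_cases hvk : v = f (k + 1)
      exacts [hvk ▸ hcdk, hcd' v hv hvk]
    obtain ⟨c₁, h₁, hc₁, heq₁⟩ :=
      hf.exists_reflTransGen_apply_ne hL ha₁ hc hc₀ (by omega) (hd.1 (f (k + 1)))
    have hc₁k : c₁ (f (k + 1)) = c (f (k + 1)) :=
      heq₁ (hf.apply_notMem_image_Icc (by omega) (by omega))
    have hc₁k₂ : c₁ (f (k + 2)) = d (f (k + 2)) := by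
      rw [heq₁ (hf.apply_notMem_image_Icc (by omega) (by omega))]
      exact hcd' _ (hf.apply_notMem_image_Icc (by omega) (by omega)) (hf.adj (k + 1)).ne'
    have hstep := recolStep_update (hc.of_reflTransGen h₁) (hd.1 (f (k + 1)))
      (hc₁k ▸ Ne.symm hcdk) fun u hu => by
        rcases eq_or_eq_of_neighborSet_eq_pair (hf.neighborSet_eq k) hu with rfl | rfl
        · exact hc₁
        · exact hc₁k₂ ▸ (hd.2 (hf.adj (k + 1))).symm
    refine (h₁.tail hstep).trans (ih hstep.2.1 ?_ (by omega) fun v hv => ?_)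
    · have h₀k : f 0 ≠ f (k + 1) := fun h =>
        hf.apply_zero_notMem_image_Icc hkm ⟨k + 1, ⟨by omega, le_rfl⟩, h.symm⟩
      rw [update_of_ne h₀k, heq₁ (hf.apply_zero_notMem_image_Icc (by omega)), hc₀]
    · by_cases hvk : v = f (k + 1)
      · simp [hvk]
      · rw [update_of_ne hvk, heq₁ hv]
        exact hcd' v hv hvk

theorem reflTransGen_of_apply_zero_eq (hf : G.IsCyclicEnumeration f m)
    (hL : ∀ v, 3 ≤ (L v).card) {a : ℕ} (ha₁ : a ∉ L (f 1)) {c d : V → ℕ} (hc : properL G L c)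
    (hd : properL G L d) (hc₀ : c (f 0) = a) (hd₀ : d (f 0) = a) :
    Relation.ReflTransGen (recolStep G L) c d := by
  have := hf.three_le
  refine hf.reflTransGen_of_eqOn hL ha₁ hc hd hc₀ (k := m - 1) (by omega) fun v hv => ?_
  obtain ⟨k, hk, rfl⟩ := hf.exists_lt_apply_eq v
  obtain rfl | hk₀ := Nat.eq_zero_or_pos k
  · rw [hc₀, hd₀]
  · exact absurd ⟨k, ⟨hk₀, by omega⟩, rfl⟩ hv

end SimpleGraph.IsCyclicEnumeration

/-- `G` is the cycle `C_n`: a connected finite graph in which every vertex has degree 2. -/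
theorem stmt13_general {V : Type*} [Fintype V] (G : SimpleGraph V)
    (hG : G.Connected)
    (hreg : ∀ v, (G.neighborSet v).ncard = 2)
    (L : V → Finset ℕ) (hL : ∀ v, 3 ≤ (L v).card)
    (hnotid : ∃ u v, L u ≠ L v)
    (α β : V → ℕ) (hα : properL G L α) (hβ : properL G L β)
    (hαu : ∃ v, unfrozenAt G L α v) (hβu : ∃ v, unfrozenAt G L β v) :
    Relation.ReflTransGen (recolStep G L) α β := by
  obtain ⟨p, q, hpq, a, hap, haq⟩ := hG.exists_adj_mem_notMem hnotid
  obtain ⟨f, m, hf, rfl, rfl⟩ := hG.exists_isCyclicEnumeration hreg hpq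
  obtain ⟨α', hαα', hα'⟩ := hf.exists_reflTransGen_apply_zero_eq hL hap haq hα hαu
  obtain ⟨β', hββ', hβ'⟩ := hf.exists_reflTransGen_apply_zero_eq hL hap haq hβ hβu
  have hα'β' := hf.reflTransGen_of_apply_zero_eq hL haq (hα.of_reflTransGen hαα')
    (hβ.of_reflTransGen hββ') hα' hβ'
  exact hαα'.trans (hα'β'.trans (symm hββ'))

/-- `G` is a cycle: a connected finite graph on at least 3 vertices in which
every vertex has degree 2. -/
theorem stmt13 {V : Type*} [Fintype V] (G : SimpleGraph V)
    (hn : 3 ≤ Fintype.card V) (hG : G.Connected)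
    (hreg : ∀ v, (G.neighborSet v).ncard = 2)
    (L : V → Finset ℕ) (hL : ∀ v, 3 ≤ (L v).card)
    (hnotid : ∃ u v, L u ≠ L v)
    (α β : V → ℕ) (hα : properL G L α) (hβ : properL G L β)
    (hαu : ∃ v, unfrozenAt G L α v) (hβu : ∃ v, unfrozenAt G L β v) :
    Relation.ReflTransGen (recolStep G L) α β :=
  stmt13_general G hG hreg L hL hnotid α β hα hβ hαu hβu
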